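/- Let ν > 1, a₀ > 0, 2 ≤ n ≤ m, and suppose B > 0 satisfies Σ_{k₁+⋯+k_n = n} w(k₁)⋯w(k_n) ≤ B^{n−1}·n^{−ν}, where w(0) = a₀, w(k) = k^{−ν} for k ≥ 1. Then S_m(n) = Σ_{k₁+⋯+k_m = n} w(k₁)⋯w(k_m) ≤ a₀^{m−n}·(m·e/n)^n·B^{n−1}·n^{−ν}. -/

import Mathlib

/-- Weighted power-law sequence: `w 0 = a₀`, `w k = k^(-ν)` for `k ≥ 1`. -/
noncomputable def plw (a₀ ν : ℝ) (k : ℕ) : ℝ :=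
  if k = 0 then a₀ else (k : ℝ) ^ (-ν)

/-- `Sm m n`: the `m`-fold convolution of `plw a₀ ν`. -/
noncomputable def Sm (a₀ ν : ℝ) (m n : ℕ) : ℝ :=
  ∑ k ∈ Finset.Nat.antidiagonalTuple m n, ∏ i : Fin m, plw a₀ ν (k i)

/-!
A tuple of `m` naturals summing to `n` has at most `n` nonzero entries, so it arises from an
`n`-tuple summing to `n` placed on some `n`-subset of the indices, the remaining `m - n` entries
being zeros that each contribute a factor `plw a₀ ν 0 = a₀`. Summing over all `m.choose n`
subsets overcounts nonnegative terms only, and `m.choose n ≤ m ^ n / n! ≤ (m e / n) ^ n`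
since `n ^ n / n! ≤ e ^ n`.
-/

open Finset

theorem plw_zero (a₀ ν : ℝ) : plw a₀ ν 0 = a₀ := if_pos rfl

theorem plw_nonneg {a₀ : ℝ} (ha : 0 ≤ a₀) (ν : ℝ) (k : ℕ) : 0 ≤ plw a₀ ν k := by
  unfold plw
  split_ifs
  exacts [ha, Real.rpow_nonneg k.cast_nonneg _]

@[to_additive]
theorem Fintype.prod_extend_const {α β γ M : Type*} [Fintype α] [Fintype β] [CommMonoid M]
    (e : α ↪ β) (t : α → γ) (c : γ) (f : γ → M) :
    ∏ i, f (Function.extend e t (fun _ ↦ c) i) =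
      f c ^ (Fintype.card β - Fintype.card α) * ∏ j, f (t j) := by
  classical
  have h_range : ∏ i ∈ univ.map e, f (Function.extend e t (fun _ ↦ c) i) = ∏ j, f (t j) := by
    simp only [prod_map, e.injective.extend_apply]
  have h_off : ∏ i ∈ (univ.map e)ᶜ, f (Function.extend e t (fun _ ↦ c) i) =
      f c ^ (Fintype.card β - Fintype.card α) := by
    rw [prod_eq_pow_card fun i hi ↦ by rw [Function.extend_apply' _ _ _ (by simpa using hi)],
      card_compl, card_map, card_univ]
  rw [← prod_mul_prod_compl (univ.map e), h_range, h_off, mul_comm]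

theorem Function.extend_comp_eq_self {α β γ : Type*} {e : α → β} (he : e.Injective)
    {k : β → γ} {c : γ} (hk : ∀ b ∉ Set.range e, k b = c) :
    Function.extend e (k ∘ e) (fun _ ↦ c) = k := by
  funext b
  by_cases hb : b ∈ Set.range e
  · obtain ⟨a, rfl⟩ := hb
    exact he.extend_apply _ _ a
  · rw [Function.extend_apply' _ _ _ hb, hk b hb]

theorem card_filter_ne_zero_le_sum {ι : Type*} (s : Finset ι) (k : ι → ℕ) :
    #{i ∈ s | k i ≠ 0} ≤ ∑ i ∈ s, k i := by
  rw [card_eq_sum_ones, sum_filter]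
  exact sum_le_sum fun i _ ↦ by split_ifs <;> omega

theorem Nat.choose_le_mul_exp_div_pow (m n : ℕ) :
    (m.choose n : ℝ) ≤ (m * Real.exp 1 / n) ^ n := by
  rcases n.eq_zero_or_pos with rfl | hn
  · simp
  have hn' : (0 : ℝ) < n := by exact_mod_cast hn
  have h_fact : (n : ℝ) ^ n / n.factorial ≤ Real.exp 1 ^ n := by
    rw [← Real.exp_nat_mul, mul_one]
    exact Real.pow_div_factorial_le_exp (x := n) hn'.le n
  calc (m.choose n : ℝ) ≤ (m : ℝ) ^ n / n.factorial := Nat.choose_le_pow_div n m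
    _ = (m / n : ℝ) ^ n * ((n : ℝ) ^ n / n.factorial) := by
      rw [div_pow]; field_simp
    _ ≤ (m / n : ℝ) ^ n * Real.exp 1 ^ n := by gcongr
    _ = (m * Real.exp 1 / n) ^ n := by rw [← mul_pow]; ring

open Finset.Nat in
theorem sum_antidiagonalTuple_prod_le {R : Type*} [CommSemiring R] [PartialOrder R]
    [IsOrderedRing R] {f : ℕ → R} (hf : ∀ k, 0 ≤ f k) {m r n : ℕ} (hnr : n ≤ r) (hrm : r ≤ m) :
    ∑ k ∈ antidiagonalTuple m n, ∏ i, f (k i) ≤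
      m.choose r * (f 0 ^ (m - r) * ∑ t ∈ antidiagonalTuple r n, ∏ j, f (t j)) := by
  classical
  let P := (powersetCard r (univ : Finset (Fin m))).attach ×ˢ antidiagonalTuple r n
  let emb (s : powersetCard r (univ : Finset (Fin m))) : Fin r ↪ Fin m :=
    (s.1.orderEmbOfFin (mem_powersetCard.1 s.2).2).toEmbedding
  let Φ (p : powersetCard r (univ : Finset (Fin m)) × (Fin r → ℕ)) : Fin m → ℕ :=
    Function.extend (emb p.1) p.2 fun _ ↦ 0
  have h_cover : antidiagonalTuple m n ⊆ P.image Φ := by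
    intro k hk
    rw [mem_antidiagonalTuple] at hk
    obtain ⟨s, h_supp, -, hs⟩ := exists_subsuperset_card_eq (subset_univ {i | k i ≠ 0})
      ((card_filter_ne_zero_le_sum _ k).trans (hk ▸ hnr)) (by simpa using hrm)
    let s' : powersetCard r (univ : Finset (Fin m)) := ⟨s, mem_powersetCard.2 ⟨subset_univ s, hs⟩⟩
    have hk_eq : Function.extend (emb s') (k ∘ emb s') (fun _ ↦ 0) = k := by
      refine Function.extend_comp_eq_self (emb s').injective fun i hi ↦ ?_
      by_contra h
      exact hi (by simpa [emb, s'] using h_supp (by simpa using h))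
    refine mem_image.2 ⟨(s', k ∘ emb s'), mem_product.2 ⟨mem_attach _ _, ?_⟩, hk_eq⟩
    have h_sum := Fintype.sum_extend_const (emb s') (k ∘ emb s') 0 id
    rw [mem_antidiagonalTuple]
    simpa [hk_eq, hk] using h_sum.symm
  calc ∑ k ∈ antidiagonalTuple m n, ∏ i, f (k i)
      ≤ ∑ k ∈ P.image Φ, ∏ i, f (k i) :=
        sum_le_sum_of_subset_of_nonneg h_cover fun k _ _ ↦ prod_nonneg fun i _ ↦ hf _
    _ ≤ ∑ p ∈ P, ∏ i, f (Φ p i) :=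
        sum_image_le_of_nonneg fun k _ ↦ prod_nonneg fun i _ ↦ hf _
    _ = m.choose r * (f 0 ^ (m - r) * ∑ t ∈ antidiagonalTuple r n, ∏ j, f (t j)) := by
        simp only [P, Φ, sum_product, Fintype.prod_extend_const, ← mul_sum, sum_const,
          card_attach, card_powersetCard, card_univ, Fintype.card_fin, nsmul_eq_mul]
        rw [mul_left_comm]

theorem Sm_upper_bound_few_vars_general (ν a₀ B : ℝ) (ha : 0 < a₀)
    (m n : ℕ) (hnm : n ≤ m)
    (hBn : Sm a₀ ν n n ≤ B ^ (n - 1) * (n : ℝ) ^ (-ν)) :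
    Sm a₀ ν m n ≤
      a₀ ^ (m - n) * ((m : ℝ) * Real.exp 1 / (n : ℝ)) ^ n * B ^ (n - 1) * (n : ℝ) ^ (-ν) := by
  have hw := plw_nonneg ha.le ν
  have h_Sn : 0 ≤ Sm a₀ ν n n := sum_nonneg fun k _ ↦ prod_nonneg fun i _ ↦ hw _
  calc Sm a₀ ν m n ≤ m.choose n * (a₀ ^ (m - n) * Sm a₀ ν n n) := by
        have h := sum_antidiagonalTuple_prod_le hw le_rfl hnm
        rw [plw_zero] at h
        exact h
    _ ≤ ((m : ℝ) * Real.exp 1 / n) ^ n * (a₀ ^ (m - n) * (B ^ (n - 1) * (n : ℝ) ^ (-ν))) := by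
        gcongr
        exact Nat.choose_le_mul_exp_div_pow m n
    _ = a₀ ^ (m - n) * ((m : ℝ) * Real.exp 1 / (n : ℝ)) ^ n * B ^ (n - 1) * (n : ℝ) ^ (-ν) := by
        ring

theorem Sm_upper_bound_few_vars (ν a₀ B : ℝ) (hν : 1 < ν) (ha : 0 < a₀) (hB : 0 < B)
    (m n : ℕ) (hn : 2 ≤ n) (hnm : n ≤ m)
    (hBn : Sm a₀ ν n n ≤ B ^ (n - 1) * (n : ℝ) ^ (-ν)) :
    Sm a₀ ν m n ≤
      a₀ ^ (m - n) * ((m : ℝ) * Real.exp 1 / (n : ℝ)) ^ n * B ^ (n - 1) * (n : ℝ) ^ (-ν) :=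
  Sm_upper_bound_few_vars_general ν a₀ B ha m n hnm hBn
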